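/- arXiv:2603.17569 — 3 statements merged into one kernel-verified Lean document; each statement's English description precedes it below -/
import Mathlib

section
/- Assume p > 0, q > 0 and x₀ + y₀ > 0. Let K⁽⁰⁾ be the block-constant kernel with values (x₀, y₀) and K⁽ℓ⁾ = A K⁽ℓ⁻¹⁾ A for ℓ ≥ 1 (the GCN-GP kernel recursion under the SBM). Then the normalized kernel K⁽ℓ⁾ / ((1/n)·tr(K⁽ℓ⁾)) converges entrywise, as ℓ → ∞, to the n×n all-ones matrix; in particular the limit matrix has rank 1, so GCN-GP suffers complete oversmoothing. -/
noncomputable section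

/-- The m×m all-ones real matrix. -/
def onesJ (m : ℕ) : Matrix (Fin m) (Fin m) ℝ := Matrix.of fun _ _ => 1

/-- The block-constant kernel with values (x, y). -/
def blockConst (m : ℕ) (x y : ℝ) : Matrix (Fin m ⊕ Fin m) (Fin m ⊕ Fin m) ℝ :=
  Matrix.fromBlocks (x • onesJ m) (y • onesJ m) (y • onesJ m) (x • onesJ m)

/-- The population two-community SBM adjacency matrix. -/
def sbmAdj (m : ℕ) (p q : ℝ) : Matrix (Fin m ⊕ Fin m) (Fin m ⊕ Fin m) ℝ :=
  blockConst m p q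

/-!
Block-constant matrices are simultaneously diagonalised by the all-ones vector and the
community-sign vector, with eigenvalues `m (x + y)` and `m (x - y)`. Hence `K⁽ℓ⁾` stays
block-constant, with `x + y = (m (p + q))^(2ℓ) (x₀ + y₀)` and `x - y = (m (p - q))^(2ℓ) (x₀ - y₀)`.
Since `|p - q| < p + q`, the ratio `(x - y) / (x + y)` tends to `0`, so after dividing by the
diagonal value `x` both block values tend to `1`.
-/
open Filter Topology

section BlockConst

variable {m : ℕ}

lemma blockConst_mul_blockConst (a b x y : ℝ) :
    blockConst m a b * blockConst m x y
      = blockConst m (m * (a * x + b * y)) (m * (a * y + b * x)) := by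
  ext i j
  rcases i with i | i <;> rcases j with j | j <;>
    simp [blockConst, onesJ, Matrix.mul_apply, Fintype.sum_sum_type] <;> ring

lemma smul_blockConst (c x y : ℝ) : c • blockConst m x y = blockConst m (c * x) (c * y) := by
  simp [blockConst, Matrix.fromBlocks_smul, smul_smul]

lemma trace_blockConst (x y : ℝ) : (blockConst m x y).trace = 2 * m * x := by
  simp [Matrix.trace, blockConst, onesJ, Fintype.sum_sum_type]
  ring

lemma blockConst_one_one : blockConst m 1 1 = Matrix.of fun _ _ => 1 := by
  ext i j
  rcases i with i | i <;> rcases j with j | j <;> simp [blockConst, onesJ]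

lemma continuous_blockConst : Continuous fun xy : ℝ × ℝ => blockConst m xy.1 xy.2 :=
  Continuous.matrix_fromBlocks (continuous_fst.smul continuous_const)
    (continuous_snd.smul continuous_const) (continuous_snd.smul continuous_const)
    (continuous_fst.smul continuous_const)

lemma Filter.Tendsto.blockConst {α : Type*} {l : Filter α} {f g : α → ℝ} {x y : ℝ}
    (hf : Tendsto f l (𝓝 x)) (hg : Tendsto g l (𝓝 y)) :
    Tendsto (fun a => _root_.blockConst m (f a) (g a)) l (𝓝 (_root_.blockConst m x y)) :=
  (continuous_blockConst.tendsto (x, y)).comp (hf.prodMk_nhds hg)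

lemma traceNormalize_blockConst (hm : m ≠ 0) (x y : ℝ) :
    ((1 / (2 * (m : ℝ))) * (blockConst m x y).trace)⁻¹ • blockConst m x y
      = blockConst m (x / x) (y / x) := by
  rw [trace_blockConst, smul_blockConst, ← mul_assoc, one_div_mul_cancel (by positivity),
    one_mul, inv_mul_eq_div, inv_mul_eq_div]

lemma eq_blockConst_of_gcn_recursion (p q x₀ y₀ : ℝ)
    (K : ℕ → Matrix (Fin m ⊕ Fin m) (Fin m ⊕ Fin m) ℝ)
    (hK0 : K 0 = blockConst m x₀ y₀)
    (hK : ∀ ℓ, K (ℓ + 1) = sbmAdj m p q * K ℓ * sbmAdj m p q) (ℓ : ℕ) :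
    K ℓ = blockConst m
      ((((m * (p + q)) ^ 2) ^ ℓ * (x₀ + y₀) + ((m * (p - q)) ^ 2) ^ ℓ * (x₀ - y₀)) / 2)
      ((((m * (p + q)) ^ 2) ^ ℓ * (x₀ + y₀) - ((m * (p - q)) ^ 2) ^ ℓ * (x₀ - y₀)) / 2) := by
  induction ℓ with
  | zero => rw [hK0]; congr 1 <;> ring
  | succ ℓ ih =>
    rw [hK, ih, sbmAdj, blockConst_mul_blockConst, blockConst_mul_blockConst]
    congr 1 <;> ring

end BlockConst

lemma tendsto_pow_mul_div_pow_mul_nhds_zero {a b : ℝ} (hab : |b| < |a|) (u v : ℝ) :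
    Tendsto (fun ℓ : ℕ => b ^ ℓ * u / (a ^ ℓ * v)) atTop (𝓝 0) := by
  have ha : a ≠ 0 := abs_pos.mp ((abs_nonneg b).trans_lt hab)
  have hρ : |b / a| < 1 := by
    rwa [abs_div, div_lt_one (abs_pos.mpr ha)]
  have := (tendsto_pow_atTop_nhds_zero_of_abs_lt_one hρ).mul_const (u / v)
  simpa [div_pow, mul_div_mul_comm] using this

lemma tendsto_add_mul_div_add_nhds_one {α : Type*} {l : Filter α} {s d : α → ℝ}
    (hs : ∀ a, s a ≠ 0) (hds : Tendsto (fun a => d a / s a) l (𝓝 0)) (c : ℝ) :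
    Tendsto (fun a => (s a + c * d a) / (s a + d a)) l (𝓝 1) := by
  have key : ∀ a, (1 + c * (d a / s a)) / (1 + d a / s a) = (s a + c * d a) / (s a + d a) := by
    intro a
    rw [← mul_div_mul_left _ _ (hs a), mul_add, mul_add, mul_one, mul_left_comm,
      mul_div_cancel₀ _ (hs a)]
  have h : Tendsto (fun a => (1 + c * (d a / s a)) / (1 + d a / s a)) l
      (𝓝 ((1 + c * 0) / (1 + 0))) :=
    (tendsto_const_nhds.add (hds.const_mul c)).div (tendsto_const_nhds.add hds) (by norm_num)
  rw [mul_zero, add_zero, div_one] at h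
  exact h.congr key

lemma Matrix.rank_of_const_one {ι K : Type*} [Fintype ι] [Nonempty ι] [Field K] :
    (Matrix.of fun (_ _ : ι) => (1 : K)).rank = 1 := by
  have hv : (fun _ : ι => (1 : K)) ≠ 0 := fun h => by
    simpa using congrFun h (Classical.arbitrary ι)
  rw [Matrix.rank_eq_finrank_span_cols,
    show Matrix.col (Matrix.of fun (_ _ : ι) => (1 : K)) = fun _ => fun _ => 1 from rfl,
    Set.range_const, finrank_span_singleton hv]

/-- Rank collapse in GCN-GP: under the SBM with p, q > 0 and x₀ + y₀ > 0, the
    trace-normalized GCN-GP kernel converges entrywise to the all-ones matrix,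
    which has rank 1 (complete oversmoothing). -/
theorem stmt2 (m : ℕ) (hm : 1 ≤ m) (p q x₀ y₀ : ℝ)
    (hp : 0 < p) (hq : 0 < q) (hxy : 0 < x₀ + y₀)
    (K : ℕ → Matrix (Fin m ⊕ Fin m) (Fin m ⊕ Fin m) ℝ)
    (hK0 : K 0 = blockConst m x₀ y₀)
    (hK : ∀ ℓ, K (ℓ + 1) = sbmAdj m p q * K ℓ * sbmAdj m p q) :
    Filter.Tendsto
        (fun ℓ => ((1 / (2 * (m : ℝ))) * Matrix.trace (K ℓ))⁻¹ • K ℓ)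
        Filter.atTop
        (nhds (Matrix.of fun (_ _ : Fin m ⊕ Fin m) => (1 : ℝ)))
    ∧ Matrix.rank (Matrix.of fun (_ _ : Fin m ⊕ Fin m) => (1 : ℝ)) = 1 := by
  have hm0 : m ≠ 0 := by omega
  have : Nonempty (Fin m) := ⟨⟨0, hm⟩⟩
  refine ⟨?_, Matrix.rank_of_const_one⟩
  set s : ℕ → ℝ := fun ℓ => ((m * (p + q)) ^ 2) ^ ℓ * (x₀ + y₀)
  set d : ℕ → ℝ := fun ℓ => ((m * (p - q)) ^ 2) ^ ℓ * (x₀ - y₀)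
  have hs : ∀ ℓ, s ℓ ≠ 0 := fun ℓ => by positivity
  have hgap : |(m * (p - q)) ^ 2| < |(m * (p + q)) ^ 2| := by
    rw [abs_pow, abs_pow, abs_mul, abs_mul]
    gcongr
    rw [abs_of_pos (add_pos hp hq)]
    exact abs_sub_lt_iff.mpr ⟨by linarith, by linarith⟩
  have hds : Tendsto (fun ℓ => d ℓ / s ℓ) atTop (𝓝 0) :=
    tendsto_pow_mul_div_pow_mul_nhds_zero hgap _ _
  have hdiag := tendsto_add_mul_div_add_nhds_one hs hds 1
  have hoff := tendsto_add_mul_div_add_nhds_one hs hds (-1)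
  rw [← blockConst_one_one]
  refine (hdiag.blockConst hoff).congr fun ℓ => ?_
  rw [eq_blockConst_of_gcn_recursion p q x₀ y₀ K hK0 hK, traceNormalize_blockConst hm0]
  congr 1 <;> field_simp <;> ring
end
end

section
/- If K is the block-constant kernel with values (x, y), then the GAT-GP one-step update K ⊙ (A K A) + A (K ⊙ K) A is the block-constant kernel with values (x′, y′), where x′ = m²·[2(p²+q²)x² + 2pq(xy + y²)] and y′ = m²·[2(p²+q²)y² + 2pq(xy + x²)]. -/
noncomputable section

lemma onesJ_mul_onesJ (m : ℕ) : onesJ m * onesJ m = (m : ℝ) • onesJ m := by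
  ext i j
  simp [onesJ, Matrix.mul_apply]

lemma blockConst_add (m : ℕ) (a b c d : ℝ) :
    blockConst m a b + blockConst m c d = blockConst m (a + c) (b + d) := by
  simp only [blockConst, Matrix.fromBlocks_add, add_smul]

lemma blockConst_mul (m : ℕ) (a b c d : ℝ) :
    blockConst m a b * blockConst m c d
      = blockConst m ((m : ℝ) * (a * c + b * d)) ((m : ℝ) * (a * d + b * c)) := by
  simp only [blockConst, Matrix.fromBlocks_multiply, Matrix.smul_mul, Matrix.mul_smul,
    onesJ_mul_onesJ, smul_smul, ← add_smul]
  congr 2 <;> ring_nf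

lemma blockConst_hadamard (m : ℕ) (a b c d : ℝ) :
    Matrix.hadamard (blockConst m a b) (blockConst m c d) = blockConst m (a * c) (b * d) := by
  ext (i | i) (j | j) <;>
    simp only [blockConst, Matrix.hadamard_apply, Matrix.fromBlocks_apply₁₁,
      Matrix.fromBlocks_apply₁₂, Matrix.fromBlocks_apply₂₁, Matrix.fromBlocks_apply₂₂,
      Matrix.smul_apply, onesJ, Matrix.of_apply, smul_eq_mul] <;> ring

theorem stmt3_general (m : ℕ) (p q x y : ℝ) :
    Matrix.hadamard (blockConst m x y)
        (sbmAdj m p q * blockConst m x y * sbmAdj m p q)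
      + sbmAdj m p q * Matrix.hadamard (blockConst m x y) (blockConst m x y) * sbmAdj m p q
      = blockConst m
          ((m : ℝ) ^ 2 * (2 * (p ^ 2 + q ^ 2) * x ^ 2 + 2 * p * q * (x * y + y ^ 2)))
          ((m : ℝ) ^ 2 * (2 * (p ^ 2 + q ^ 2) * y ^ 2 + 2 * p * q * (x * y + x ^ 2))) := by
  simp only [sbmAdj, blockConst_mul, blockConst_hadamard, blockConst_add]
  congr 1 <;> ring

/-- One step of the GAT-GP kernel update K ⊙ (A K A) + A (K ⊙ K) A maps a
    block-constant kernel with values (x, y) to the block-constant kernel with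
    values (x′, y′). -/
theorem stmt3 (m : ℕ) (hm : 1 ≤ m) (p q x y : ℝ) :
    Matrix.hadamard (blockConst m x y)
        (sbmAdj m p q * blockConst m x y * sbmAdj m p q)
      + sbmAdj m p q * Matrix.hadamard (blockConst m x y) (blockConst m x y) * sbmAdj m p q
      = blockConst m
          ((m : ℝ) ^ 2 * (2 * (p ^ 2 + q ^ 2) * x ^ 2 + 2 * p * q * (x * y + y ^ 2)))
          ((m : ℝ) ^ 2 * (2 * (p ^ 2 + q ^ 2) * y ^ 2 + 2 * p * q * (x * y + x ^ 2))) :=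
  stmt3_general m p q x y
end
end

section
/- Let U be an n×n real orthogonal matrix whose first column is v₁ and whose second column is v₂, and let λ̄ ∈ ℝⁿ have first coordinate λ̄₁ = m(p+q) and second coordinate λ̄₂ = m(p−q). Set S = U·diag(λ̄)·Uᵀ and let K⁽⁰⁾ be the block-constant kernel with values (x₀, y₀). Then for every ℓ ≥ 0, Sᵉ·K⁽⁰⁾·Sᵉ = Aᵉ·K⁽⁰⁾·Aᵉ (matrix powers ℓ on each side), i.e., the Specformer-GP kernel recursion collapses exactly to the GCN-GP kernel recursion under the SBM. -/
noncomputable section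

open Matrix

/-- v₁ = (1/√n)·1ₙ with n = 2m. -/
def vOne (m : ℕ) : Fin m ⊕ Fin m → ℝ := fun _ => 1 / Real.sqrt (2 * m)

/-- v₂ = (1/√n)·(1ₘ, −1ₘ) with n = 2m. -/
def vTwo (m : ℕ) : Fin m ⊕ Fin m → ℝ :=
  Sum.elim (fun _ => 1 / Real.sqrt (2 * m)) (fun _ => -(1 / Real.sqrt (2 * m)))

/-!
Every block-constant kernel is `m(x+y) v₁v₁ᵀ + m(x−y) v₂v₂ᵀ`, so a matrix acts on it from the
left only through its action on `v₁` and `v₂`. By orthogonality of `U`, `S = U diag(λ̄) Uᵀ` has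
eigenpairs `(λ̄₁, v₁)` and `(λ̄₂, v₂)`, which are exactly the eigenpairs of `A` on these vectors;
hence `S K = A K` for every block-constant `K`, and `K S = K A` by symmetry. Since `A K` and
`K A` are again block-constant, these identities propagate to all powers.
-/

theorem Matrix.conj_diagonal_mulVec_of_col {n R : Type*} [Fintype n] [DecidableEq n]
    [CommSemiring R] {U : Matrix n n R} (hU : Uᵀ * U = 1) (lam : n → R) {j : n} {v : n → R}
    (hv : U.col j = v) :
    (U * diagonal lam * Uᵀ) *ᵥ v = lam j • v := by
  have hv' : v = U *ᵥ Pi.single j 1 := by rw [mulVec_single_one, hv]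
  rw [hv', mulVec_mulVec, Matrix.mul_assoc, Matrix.mul_assoc, hU, Matrix.mul_one,
    ← mulVec_mulVec, diagonal_mulVec_single, mul_one, ← mulVec_smul, ← Pi.single_smul',
    smul_eq_mul, mul_one]

section Monoid

variable {M : Type*} [Monoid M] {P : M → Prop} {a b : M}

theorem pow_mul_eq_pow_mul_of_forall (hP : ∀ x, P x → P (b * x))
    (h : ∀ x, P x → a * x = b * x) (n : ℕ) {x : M} (hx : P x) : a ^ n * x = b ^ n * x := by
  induction n generalizing x with
  | zero => simp
  | succ n ih => rw [pow_succ, mul_assoc, h x hx, ih (hP x hx), ← mul_assoc, ← pow_succ]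

theorem mul_pow_eq_mul_pow_of_forall (hP : ∀ x, P x → P (x * b))
    (h : ∀ x, P x → x * a = x * b) (n : ℕ) {x : M} (hx : P x) : x * a ^ n = x * b ^ n := by
  simpa using congrArg MulOpposite.unop <|
    pow_mul_eq_pow_mul_of_forall (P := fun y : Mᵐᵒᵖ => P y.unop) (a := .op a) (b := .op b)
      (fun y hy => hP y.unop hy) (fun y hy => congrArg MulOpposite.op (h y.unop hy)) n
      (x := .op x) hx

end Monoid

theorem blockConst_mul_s14 (m : ℕ) (x y x' y' : ℝ) :
    blockConst m x y * blockConst m x' y'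
      = blockConst m (m * (x * x' + y * y')) (m * (x * y' + y * x')) := by
  ext (i | i) (j | j) <;>
    simp only [blockConst, onesJ, smul_of, mul_apply, Fintype.sum_sum_type, fromBlocks_apply₁₁,
      fromBlocks_apply₁₂, fromBlocks_apply₂₁, fromBlocks_apply₂₂, of_apply, Pi.smul_apply,
      smul_eq_mul, mul_one, Finset.sum_const, Finset.card_univ, Fintype.card_fin,
      nsmul_eq_mul] <;>
    ring

theorem blockConst_transpose (m : ℕ) (x y : ℝ) : (blockConst m x y)ᵀ = blockConst m x y := by
  ext (i | i) (j | j) <;> simp [blockConst, onesJ]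

theorem blockConst_mulVec_vOne (m : ℕ) (x y : ℝ) :
    blockConst m x y *ᵥ vOne m = (m * (x + y)) • vOne m := by
  ext (i | i) <;>
    simp only [blockConst, onesJ, smul_of, vOne, mulVec, dotProduct, Fintype.sum_sum_type,
      fromBlocks_apply₁₁, fromBlocks_apply₁₂, fromBlocks_apply₂₁, fromBlocks_apply₂₂, of_apply,
      Pi.smul_apply, smul_eq_mul, mul_one, Finset.sum_const, Finset.card_univ, Fintype.card_fin,
      nsmul_eq_mul] <;>
    ring

theorem blockConst_mulVec_vTwo (m : ℕ) (x y : ℝ) :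
    blockConst m x y *ᵥ vTwo m = (m * (x - y)) • vTwo m := by
  ext (i | i) <;>
    simp only [blockConst, onesJ, smul_of, vTwo, Sum.elim_inl, Sum.elim_inr, mulVec, dotProduct,
      Fintype.sum_sum_type, fromBlocks_apply₁₁, fromBlocks_apply₁₂, fromBlocks_apply₂₁,
      fromBlocks_apply₂₂, of_apply, Pi.smul_apply, smul_eq_mul, mul_one, Finset.sum_const,
      Finset.card_univ, Fintype.card_fin, nsmul_eq_mul] <;>
    ring

theorem blockConst_eq_add_vecMulVec (m : ℕ) (x y : ℝ) :
    blockConst m x y = (m * (x + y)) • vecMulVec (vOne m) (vOne m)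
      + (m * (x - y)) • vecMulVec (vTwo m) (vTwo m) := by
  ext i j
  have hm : (m : ℝ) ≠ 0 := by
    rcases i with k | k <;> exact Nat.cast_ne_zero.mpr k.pos.ne'
  have hsq : 1 / √(2 * m) * (1 / √(2 * m)) = 1 / (2 * m) := by
    rw [div_mul_div_comm, one_mul, Real.mul_self_sqrt (by positivity)]
  rcases i with i | i <;> rcases j with j | j <;>
    simp only [blockConst, onesJ, vOne, vTwo, vecMulVec_apply, Matrix.add_apply,
      Matrix.smul_apply, fromBlocks_apply₁₁, fromBlocks_apply₁₂, fromBlocks_apply₂₁,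
      fromBlocks_apply₂₂, of_apply, Sum.elim_inl, Sum.elim_inr, smul_eq_mul, mul_one, mul_neg,
      neg_mul, neg_neg, hsq] <;>
    field_simp <;> ring

theorem mul_blockConst_eq_of_mulVec_eq {m : ℕ}
    {M N : Matrix (Fin m ⊕ Fin m) (Fin m ⊕ Fin m) ℝ}
    (h₁ : M *ᵥ vOne m = N *ᵥ vOne m) (h₂ : M *ᵥ vTwo m = N *ᵥ vTwo m) (x y : ℝ) :
    M * blockConst m x y = N * blockConst m x y := by
  simp only [blockConst_eq_add_vecMulVec, Matrix.mul_add, Matrix.mul_smul, mul_vecMulVec, h₁, h₂]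

def IsBlockConst (m : ℕ) (K : Matrix (Fin m ⊕ Fin m) (Fin m ⊕ Fin m) ℝ) : Prop :=
  ∃ x y, K = blockConst m x y

namespace IsBlockConst

variable {m : ℕ} {K L : Matrix (Fin m ⊕ Fin m) (Fin m ⊕ Fin m) ℝ}

theorem mul (hK : IsBlockConst m K) (hL : IsBlockConst m L) : IsBlockConst m (K * L) := by
  obtain ⟨x, y, rfl⟩ := hK
  obtain ⟨x', y', rfl⟩ := hL
  exact ⟨_, _, blockConst_mul_s14 m x y x' y'⟩

theorem mul_pow (hK : IsBlockConst m K) (hL : IsBlockConst m L) (n : ℕ) :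
    IsBlockConst m (K * L ^ n) := by
  induction n with
  | zero => simpa
  | succ n ih => simpa only [pow_succ, ← mul_assoc] using ih.mul hL

end IsBlockConst

theorem stmt14_general (m : ℕ) (p q x₀ y₀ : ℝ)
    (U : Matrix (Fin m ⊕ Fin m) (Fin m ⊕ Fin m) ℝ)
    (hU1 : Uᵀ * U = 1)
    (e₁ e₂ : Fin m ⊕ Fin m)
    (hcol1 : ∀ i, U i e₁ = vOne m i) (hcol2 : ∀ i, U i e₂ = vTwo m i)
    (lam : Fin m ⊕ Fin m → ℝ)
    (hl1 : lam e₁ = (m : ℝ) * (p + q)) (hl2 : lam e₂ = (m : ℝ) * (p - q))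
    (S : Matrix (Fin m ⊕ Fin m) (Fin m ⊕ Fin m) ℝ)
    (hS : S = U * Matrix.diagonal lam * Uᵀ) :
    ∀ ℓ : ℕ,
      S ^ ℓ * blockConst m x₀ y₀ * S ^ ℓ
        = sbmAdj m p q ^ ℓ * blockConst m x₀ y₀ * sbmAdj m p q ^ ℓ := by
  intro ℓ
  have hA : IsBlockConst m (sbmAdj m p q) := ⟨p, q, rfl⟩
  have hK : IsBlockConst m (blockConst m x₀ y₀) := ⟨x₀, y₀, rfl⟩
  have hS_mul : ∀ K, IsBlockConst m K → S * K = sbmAdj m p q * K := by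
    rintro K ⟨x, y, rfl⟩
    refine mul_blockConst_eq_of_mulVec_eq ?_ ?_ x y
    · rw [hS, conj_diagonal_mulVec_of_col hU1 lam (funext hcol1), hl1, sbmAdj,
        blockConst_mulVec_vOne]
    · rw [hS, conj_diagonal_mulVec_of_col hU1 lam (funext hcol2), hl2, sbmAdj,
        blockConst_mulVec_vTwo]
  have hS_symm : Sᵀ = S := by simp [hS, transpose_mul, Matrix.mul_assoc]
  have hmul_S : ∀ K, IsBlockConst m K → K * S = K * sbmAdj m p q := by
    rintro K ⟨x, y, rfl⟩
    simpa only [transpose_mul, blockConst_transpose, hS_symm, sbmAdj] using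
      congrArg transpose (hS_mul _ ⟨x, y, rfl⟩)
  calc S ^ ℓ * blockConst m x₀ y₀ * S ^ ℓ
      = S ^ ℓ * (blockConst m x₀ y₀ * sbmAdj m p q ^ ℓ) := by
        rw [mul_assoc, mul_pow_eq_mul_pow_of_forall (fun _ hL => hL.mul hA) hmul_S ℓ hK]
    _ = sbmAdj m p q ^ ℓ * (blockConst m x₀ y₀ * sbmAdj m p q ^ ℓ) :=
        pow_mul_eq_pow_mul_of_forall (fun _ hL => hA.mul hL) hS_mul ℓ (hK.mul_pow hA ℓ)
    _ = _ := (mul_assoc _ _ _).symm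

/-- Specformer collapses to GCN: if the learned spectral filter has coefficient
    m(p+q) on the eigendirection v₁ and m(p−q) on v₂, then the Specformer-GP kernel
    recursion coincides exactly with the GCN-GP recursion under the SBM:
    Sᵉ K⁽⁰⁾ Sᵉ = Aᵉ K⁽⁰⁾ Aᵉ for all ℓ. -/
theorem stmt14 (m : ℕ) (hm : 1 ≤ m) (p q x₀ y₀ : ℝ)
    (U : Matrix (Fin m ⊕ Fin m) (Fin m ⊕ Fin m) ℝ)
    (hU1 : Uᵀ * U = 1) (hU2 : U * Uᵀ = 1)
    (e₁ e₂ : Fin m ⊕ Fin m) (he : e₁ ≠ e₂)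
    (hcol1 : ∀ i, U i e₁ = vOne m i) (hcol2 : ∀ i, U i e₂ = vTwo m i)
    (lam : Fin m ⊕ Fin m → ℝ)
    (hl1 : lam e₁ = (m : ℝ) * (p + q)) (hl2 : lam e₂ = (m : ℝ) * (p - q))
    (S : Matrix (Fin m ⊕ Fin m) (Fin m ⊕ Fin m) ℝ)
    (hS : S = U * Matrix.diagonal lam * Uᵀ) :
    ∀ ℓ : ℕ,
      S ^ ℓ * blockConst m x₀ y₀ * S ^ ℓ
        = sbmAdj m p q ^ ℓ * blockConst m x₀ y₀ * sbmAdj m p q ^ ℓ :=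
  stmt14_general m p q x₀ y₀ U hU1 e₁ e₂ hcol1 hcol2 lam hl1 hl2 S hS
end
end
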